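/- If Ω ⊂ ℝ^{n+1} is an open set satisfying the (M, R₀) two-sided corkscrew condition, then for every x ∈ ∂Ω and r ∈ (0, R₀), the n-dimensional Hausdorff measure of ∂Ω ∩ B(x,r) is at least c r^n, where c > 0 depends only on n and M. (Two-sided corkscrews imply lower Ahlfors regularity.) -/

import Mathlib

open Metric MeasureTheory Set Module

/-- A segment from a point of an open set `Ω` to a point of its complement
meets the frontier of `Ω`. -/
lemma segment_crosses_frontier {E : Type*} [NormedAddCommGroup E] [NormedSpace ℝ E]
    {Ω : Set E} (hΩ : IsOpen Ω) {a b : E} (ha : a ∈ Ω) (hb : b ∈ Ωᶜ) :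
    ∃ z ∈ segment ℝ a b, z ∈ frontier Ω := by
  by_contra h
  push_neg at h
  have hpc : IsPreconnected (segment ℝ a b) := (convex_segment a b).isPreconnected
  have hbcl : b ∉ closure Ω := by
    intro hbc
    exact h b (right_mem_segment ℝ a b) ⟨hbc, by rwa [hΩ.interior_eq]⟩
  have := hpc Ω (closure Ω)ᶜ hΩ isClosed_closure.isOpen_compl
    (fun z hz => by
      rcases em (z ∈ Ω) with h1 | h1
      · exact Or.inl h1
      · exact Or.inr fun hcl => h z hz ⟨hcl, by rwa [hΩ.interior_eq]⟩)
    ⟨a, left_mem_segment ℝ a b, ha⟩ ⟨b, right_mem_segment ℝ a b, hbcl⟩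
  obtain ⟨z, _, hz2, hz3⟩ := this
  exact hz3 (subset_closure hz2)

/-- A quantitative lower bound for the `k`-dimensional Hausdorff measure of a ball
in a `k`-dimensional Euclidean space. -/
lemma euclidean_ball_hausdorff_lower (m k : ℕ) (hmk : m = k)
    (c : EuclideanSpace ℝ (Fin m)) (ρ : ℝ) (hρ : 0 < ρ) :
    ENNReal.ofReal ((2 * (ρ / Real.sqrt (k + 1))) ^ k) ≤ μH[(k : ℝ)] (ball c ρ) := by
  subst hmk
  set s : ℝ := ρ / Real.sqrt (m + 1) with hsdef
  have hsq : (0:ℝ) < Real.sqrt (m + 1) := Real.sqrt_pos.2 (by positivity)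
  have hs : 0 < s := by positivity
  set F := WithLp.equiv 2 (Fin m → ℝ) with hF
  have hLip : LipschitzWith 1 (F : EuclideanSpace ℝ (Fin m) → (Fin m → ℝ)) :=
    PiLp.lipschitzWith_ofLp 2 _
  have h1 : μH[(m:ℝ)] ((F : EuclideanSpace ℝ (Fin m) → (Fin m → ℝ)) '' ball c ρ)
      ≤ μH[(m:ℝ)] (ball c ρ) := by
    simpa using hLip.hausdorffMeasure_image_le (by positivity) (ball c ρ)
  have h2 : (μH[(m:ℝ)] : Measure (Fin m → ℝ)) = volume := by
    have := hausdorffMeasure_pi_real (ι := Fin m)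
    simpa using this
  have hsub : ball (F c) s ⊆ (F : EuclideanSpace ℝ (Fin m) → (Fin m → ℝ)) '' ball c ρ := by
    intro y hy
    refine ⟨F.symm y, ?_, by simp⟩
    rw [mem_ball, EuclideanSpace.dist_eq]
    have hptwise : ∀ i, dist (y i) (F c i) < s := fun i =>
      lt_of_le_of_lt (dist_le_pi_dist y (F c) i) (mem_ball.1 hy)
    have hsum : (∑ i, dist ((F.symm y) i) (c i) ^ 2) ≤ (m : ℝ) * s ^ 2 := by
      calc (∑ i, dist ((F.symm y) i) (c i) ^ 2) ≤ ∑ _i : Fin m, s ^ 2 := by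
            refine Finset.sum_le_sum fun i _ => ?_
            have : dist ((F.symm y) i) (c i) = dist (y i) (F c i) := rfl
            rw [this]
            exact pow_le_pow_left₀ dist_nonneg (le_of_lt (hptwise i)) 2
        _ = (m : ℝ) * s ^ 2 := by simp [mul_comm]
    have : Real.sqrt (∑ i, dist ((F.symm y) i) (c i) ^ 2)
        ≤ Real.sqrt ((m : ℝ) * s ^ 2) := Real.sqrt_le_sqrt hsum
    refine lt_of_le_of_lt this ?_
    rw [show ρ = Real.sqrt (((m:ℝ)+1) * s ^ 2) by
      rw [Real.sqrt_mul (by positivity), Real.sqrt_sq hs.le, hsdef]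
      field_simp]
    exact Real.sqrt_lt_sqrt (by positivity) (by nlinarith)
  calc ENNReal.ofReal ((2 * s) ^ m) = volume (ball (F c) s) := by
        rw [Real.volume_pi_ball _ hs]; simp
    _ ≤ volume ((F : EuclideanSpace ℝ (Fin m) → (Fin m → ℝ)) '' ball c ρ) := by
        rw [← h2] at *; exact measure_mono hsub
    _ ≤ μH[(m:ℝ)] (ball c ρ) := by rw [← h2] at *; exact h1

/-- The `(M, R₀)` two-sided corkscrew condition for an open set `Ω ⊆ ℝ^{n+1}`:
for every boundary point `x` and every scale `r ∈ (0, R₀)` there are balls of radius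
`r/M` contained in `Ω ∩ B(x,r)` and in `Ωᶜ ∩ B(x,r)` respectively. -/
def TwoSidedCorkscrew (n : ℕ) (Ω : Set (EuclideanSpace ℝ (Fin (n + 1))))
    (M R₀ : ℝ) : Prop :=
  ∀ x ∈ frontier Ω, ∀ r : ℝ, 0 < r → r < R₀ →
    ∃ x₁ x₂ : EuclideanSpace ℝ (Fin (n + 1)),
      ball x₁ (r / M) ⊆ Ω ∩ ball x r ∧ ball x₂ (r / M) ⊆ Ωᶜ ∩ ball x r

/-- Two-sided corkscrews imply lower Ahlfors regularity: there is `c > 0`,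
depending only on `n` and `M`, such that `H^n(∂Ω ∩ B(x,r)) ≥ c rⁿ` for every
`x ∈ ∂Ω` and `r ∈ (0, R₀)`. -/
theorem corkscrew_implies_lower_ahlfors_regular (n : ℕ) (M : ℝ) (hM : 0 < M) :
    ∃ c : ℝ, 0 < c ∧
      ∀ (R₀ : ℝ) (Ω : Set (EuclideanSpace ℝ (Fin (n + 1)))), IsOpen Ω →
        TwoSidedCorkscrew n Ω M R₀ →
        ∀ x ∈ frontier Ω, ∀ r : ℝ, 0 < r → r < R₀ →
          ENNReal.ofReal (c * r ^ n) ≤ μH[(n : ℝ)] (frontier Ω ∩ ball x r) := by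
  have hsq : (0:ℝ) < Real.sqrt (n + 1) := Real.sqrt_pos.2 (by positivity)
  refine ⟨(1 / (M * Real.sqrt (n + 1))) ^ n, by positivity, ?_⟩
  intro R₀ Ω hΩ hcork x hx r hr hrR
  obtain ⟨x₁, x₂, h₁, h₂⟩ := hcork x hx r hr hrR
  have hrM : 0 < r / M := by positivity
  have hx₁ : x₁ ∈ Ω := (h₁ (mem_ball_self hrM)).1
  have hx₂ : x₂ ∈ Ωᶜ := (h₂ (mem_ball_self hrM)).1
  have hne : x₂ - x₁ ≠ 0 := sub_ne_zero.2 fun h => hx₂ (h ▸ hx₁)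
  set K : Submodule ℝ (EuclideanSpace ℝ (Fin (n+1))) := (ℝ ∙ (x₂ - x₁))ᗮ with hKdef
  have hfin : finrank ℝ K = n := by
    have h1 := Submodule.finrank_add_finrank_orthogonal
      (K := ((ℝ ∙ (x₂ - x₁)) : Submodule ℝ (EuclideanSpace ℝ (Fin (n+1)))))
    rw [finrank_span_singleton hne, finrank_euclideanSpace_fin, ← hKdef] at h1
    omega
  set P := K.orthogonalProjectionOnto with hPdef
  have hPLip : LipschitzWith 1 (P : EuclideanSpace ℝ (Fin (n+1)) → K) := by
    refine LipschitzWith.weaken (ContinuousLinearMap.lipschitz _) ?_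
    rw [← NNReal.coe_le_coe]; simpa using Submodule.orthogonalProjectionOnto_norm_le K
  have hPd : P (x₂ - x₁) = 0 := by
    apply Submodule.orthogonalProjectionOnto_apply_of_mem_orthogonal
    exact Submodule.le_orthogonal_orthogonal _ (Submodule.mem_span_singleton_self _)
  set ρ : ℝ := r / (2 * M) with hρdef
  have hρ : 0 < ρ := by positivity
  have hρltrM : ρ < r / M := by
    rw [hρdef, div_lt_div_iff₀ (by positivity) (by positivity)]; nlinarith
  have key : ball (P x₁) ρ ⊆ (P : EuclideanSpace ℝ (Fin (n+1)) → K) '' (frontier Ω ∩ ball x r) := by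
    rintro q hq
    have hvK : ((q : EuclideanSpace ℝ (Fin (n+1))) - (P x₁ : EuclideanSpace ℝ (Fin (n+1)))) ∈ K :=
      K.sub_mem q.2 (P x₁).2
    set v : EuclideanSpace ℝ (Fin (n+1)) := (q : EuclideanSpace ℝ (Fin (n+1))) - (P x₁ : EuclideanSpace ℝ (Fin (n+1))) with hvdef
    have hvnorm : ‖v‖ < ρ := by
      have h' := mem_ball_iff_norm.1 hq
      have : ‖q - P x₁‖ = ‖v‖ := by
        rw [hvdef]
        simp [AddSubgroupClass.coe_norm]
      rwa [this] at h'
    have ha : x₁ + v ∈ Ω ∩ ball x r := h₁ (by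
      rw [mem_ball_iff_norm]; simpa using hvnorm.trans hρltrM)
    have hb : x₂ + v ∈ Ωᶜ ∩ ball x r := h₂ (by
      rw [mem_ball_iff_norm]; simpa using hvnorm.trans hρltrM)
    obtain ⟨z, hzseg, hzfr⟩ := segment_crosses_frontier hΩ ha.1 hb.1
    have hzball : z ∈ ball x r := (convex_ball x r).segment_subset ha.2 hb.2 hzseg
    refine ⟨z, ⟨hzfr, hzball⟩, ?_⟩
    obtain ⟨u, w, hu, hw, huw, rfl⟩ := hzseg
    have hPv : P v = ⟨v, hvK⟩ := Submodule.orthogonalProjectionOnto_mem_subspace_eq_self (⟨v, hvK⟩ : K)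
    have hPx2 : P x₂ = P x₁ := by
      have h0 : P x₂ - P x₁ = 0 := by rw [← map_sub]; exact hPd
      exact sub_eq_zero.1 h0
    have hPz : P (u • (x₁ + v) + w • (x₂ + v)) = P x₁ + ⟨v, hvK⟩ := by
      rw [map_add, ContinuousLinearMap.map_smul, ContinuousLinearMap.map_smul, map_add, map_add, hPv, hPx2, ← add_smul, huw, one_smul]
    rw [hPz]
    apply Subtype.ext
    simp [hvdef]
  set eK := ((stdOrthonormalBasis ℝ K).reindex (finCongr hfin)).repr with heK
  set f : EuclideanSpace ℝ (Fin (n+1)) → EuclideanSpace ℝ (Fin n) :=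
    fun y => eK (P y) with hf
  have hfLip : LipschitzWith 1 f := by
    have h' := eK.isometry.lipschitz.comp hPLip
    rw [one_mul] at h'
    exact h'
  have himg : ball (f x₁) ρ ⊆ f '' (frontier Ω ∩ ball x r) := by
    have hball : ball (f x₁) ρ = eK.toIsometryEquiv '' ball (P x₁) ρ :=
      (eK.toIsometryEquiv.image_ball _ _).symm
    rw [hball]
    rintro y ⟨q, hq, rfl⟩
    obtain ⟨z, hz, hPz⟩ := key hq
    exact ⟨z, hz, by simp [hf, hPz]⟩
  have hmeas : μH[(n:ℝ)] (ball (f x₁) ρ) ≤ μH[(n:ℝ)] (frontier Ω ∩ ball x r) := by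
    calc μH[(n:ℝ)] (ball (f x₁) ρ) ≤ μH[(n:ℝ)] (f '' (frontier Ω ∩ ball x r)) :=
          measure_mono himg
      _ ≤ μH[(n:ℝ)] (frontier Ω ∩ ball x r) := by
          have h' := hfLip.hausdorffMeasure_image_le (d := (n:ℝ)) (by positivity)
            (frontier Ω ∩ ball x r)
          rwa [ENNReal.coe_one, ENNReal.one_rpow, one_mul] at h'
  have hlow := euclidean_ball_hausdorff_lower n n rfl (f x₁) ρ hρ
  refine le_trans (le_of_eq ?_) (hlow.trans hmeas)
  congr 1
  rw [← mul_pow]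
  congr 1
  rw [hρdef]
  field_simp
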